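/- Suppose λ > 0, λ̂ > 0, and let μ ∈ (0, 1] satisfy μ ≤ λ̃/λ. Then μ √(σ_N/σ_{p+1}) · λ ≤ λ̂ ≤ λ, and consequently √(λ² − λ̂²) ≤ √(1 − (σ_N/σ_{p+1}) μ²) · λ. -/

import Mathlib

/-!
Writing `v = Pᵀ g` and `c i = u i ⬝ v`, both `λ̃² = ∑ c i ² / σ i` and `λ̂² = ∑ c i ² / τ i` are
sums over the common eigenbasis, where `τ i = max σ_i σ_{p+1}` are the eigenvalues of `Q`.
Since `σ_N / σ_{p+1} · τ i ≤ σ i ≤ τ i`, this gives `(σ_N / σ_{p+1}) λ̃² ≤ λ̂² ≤ λ̃²`.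
Moreover `λ̃ ≤ λ`, because `H⁻¹ - P H_r⁻¹ Pᵀ` is positive semidefinite. Combined with `μ λ ≤ λ̃`
these give all three inequalities.
-/

open Matrix

lemma Antitone.ite_lt_eq_max {α β : Type*} [LinearOrder α] [LinearOrder β] {f : α → β}
    (hf : Antitone f) (k i : α) : (if i < k then f i else f k) = max (f i) (f k) := by
  split_ifs with h
  · exact (max_eq_left (hf h.le)).symm
  · exact (max_eq_right (hf (not_lt.mp h))).symm

section OrderedField

variable {K : Type*} [Field K] [LinearOrder K] [IsStrictOrderedRing K]

lemma div_mul_max_le {a b c : K} (hb : 0 < b) (hc : 0 ≤ c) (hca : c ≤ a) (hcb : c ≤ b) :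
    c / b * max a b ≤ a := by
  rw [mul_max_of_nonneg _ _ (div_nonneg hc hb.le), div_mul_cancel₀ _ hb.ne']
  exact max_le (mul_le_of_le_one_left (hc.trans hca) ((div_le_one hb).mpr hcb)) hca

lemma mul_sum_inv_mul_sq_le_sum_inv_mul_sq {ι : Type*} [Fintype ι] {a b c : ι → K} {r : K}
    (ha : ∀ i, 0 < a i) (hb : ∀ i, 0 < b i) (hab : ∀ i, r * a i ≤ b i) :
    r * ∑ i, (b i)⁻¹ * c i ^ 2 ≤ ∑ i, (a i)⁻¹ * c i ^ 2 := by
  rw [Finset.mul_sum]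
  refine Finset.sum_le_sum fun i _ => ?_
  rw [← mul_assoc]
  refine mul_le_mul_of_nonneg_right ?_ (sq_nonneg _)
  rw [← div_eq_mul_inv, div_le_iff₀ (hb i), inv_mul_eq_div, le_div_iff₀ (ha i)]
  exact hab i

end OrderedField

lemma Real.sqrt_sq_sub_sq_le_of_mul_le {a b c : ℝ} (ha : 0 ≤ a) (hca : 0 ≤ c * a)
    (h : c * a ≤ b) : √(a ^ 2 - b ^ 2) ≤ √(1 - c ^ 2) * a := by
  have hsq : a ^ 2 - b ^ 2 ≤ (1 - c ^ 2) * a ^ 2 := by nlinarith [pow_le_pow_left₀ hca h 2]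
  calc √(a ^ 2 - b ^ 2) ≤ √((1 - c ^ 2) * a ^ 2) := Real.sqrt_le_sqrt hsq
    _ = √(1 - c ^ 2) * a := by rw [Real.sqrt_mul' _ (sq_nonneg a), Real.sqrt_sq ha]

namespace Matrix

lemma mulVec_injective_of_rank_eq_card {K m n : Type*} [Field K] [Fintype m] [Fintype n]
    {A : Matrix m n K} (hA : A.rank = Fintype.card n) : Function.Injective A.mulVec := by
  have h := LinearMap.finrank_range_add_finrank_ker A.mulVecLin
  rw [rank] at hA
  rw [hA, Module.finrank_fintype_fun_eq_card] at h
  have hker : LinearMap.ker A.mulVecLin = ⊥ := Submodule.finrank_eq_zero.mp (by omega)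
  exact LinearMap.ker_eq_bot.mp hker

/-- `K := H⁻¹ - P (PᵀHP)⁻¹ Pᵀ` satisfies `K H K = K`, so it is positive semidefinite. -/
lemma PosDef.dotProduct_inv_compression_mulVec_le {m n : Type*} [Fintype m] [Fintype n]
    [DecidableEq m] [DecidableEq n] {H : Matrix n n ℝ} (hH : H.PosDef) {P : Matrix n m ℝ}
    (hP : Function.Injective P.mulVec) (g : n → ℝ) :
    (Pᵀ *ᵥ g) ⬝ᵥ ((Pᵀ * H * P)⁻¹ *ᵥ (Pᵀ *ᵥ g)) ≤ g ⬝ᵥ (H⁻¹ *ᵥ g) := by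
  have hHr : (Pᵀ * H * P).PosDef := by
    simpa only [conjTranspose_eq_transpose_of_trivial] using hH.conjTranspose_mul_mul_same hP
  have hHd : IsUnit H.det := (isUnit_iff_isUnit_det H).mp hH.isUnit
  have hHrd : IsUnit (Pᵀ * H * P).det := (isUnit_iff_isUnit_det _).mp hHr.isUnit
  set X := P * (Pᵀ * H * P)⁻¹ * Pᵀ with hX
  have hXHX : X * H * X = X := by
    calc X * H * X = P * ((Pᵀ * H * P)⁻¹ * ((Pᵀ * H * P) * ((Pᵀ * H * P)⁻¹ * Pᵀ))) := by
          simp only [hX, Matrix.mul_assoc]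
      _ = X := by rw [mul_nonsing_inv_cancel_left _ _ hHrd, hX, Matrix.mul_assoc P]
  have hXherm : X.IsHermitian := by
    simpa only [conjTranspose_eq_transpose_of_trivial] using
      isHermitian_mul_mul_conjTranspose P hHr.isHermitian.inv
  have hKHK : (H⁻¹ - X)ᴴ * H * (H⁻¹ - X) = H⁻¹ - X := by
    rw [(hH.isHermitian.inv.sub hXherm).eq]
    simp only [sub_mul, mul_sub, nonsing_inv_mul H hHd, one_mul,
      mul_nonsing_inv_cancel_right _ _ hHd, hXHX, sub_self, sub_zero]
  have hK : 0 ≤ g ⬝ᵥ ((H⁻¹ - X) *ᵥ g) := by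
    simpa only [hKHK, star_trivial] using
      (hH.posSemidef.conjTranspose_mul_mul_same (H⁻¹ - X)).dotProduct_mulVec_nonneg g
  have hXg : g ⬝ᵥ (X *ᵥ g) = (Pᵀ *ᵥ g) ⬝ᵥ ((Pᵀ * H * P)⁻¹ *ᵥ (Pᵀ *ᵥ g)) := by
    rw [hX, ← mulVec_mulVec, ← mulVec_mulVec, dotProduct_mulVec, mulVec_transpose]
  rw [sub_mulVec, dotProduct_sub, hXg] at hK
  linarith

section OrthonormalEigenbasis

variable {K ι : Type*} [Field K] [Fintype ι] [DecidableEq ι] {u : ι → ι → K}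

lemma of_mul_transpose_eq_one_of_orthonormal
    (hortho : ∀ i j, u i ⬝ᵥ u j = if i = j then 1 else 0) : of u * (of u)ᵀ = 1 := by
  ext i j
  simpa [mul_apply, one_apply, dotProduct] using hortho i j

lemma eq_transpose_mul_diagonal_mul_of_orthonormal_eigenvectors {M : Matrix ι ι K} {d : ι → K}
    (hortho : ∀ i j, u i ⬝ᵥ u j = if i = j then 1 else 0)
    (heig : ∀ i, M *ᵥ u i = d i • u i) :
    M = (of u)ᵀ * diagonal d * of u := by
  have hMRt : M * (of u)ᵀ = (of u)ᵀ * diagonal d := by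
    ext i j
    rw [mul_diagonal, mul_comm]
    simpa [mul_apply, mulVec, dotProduct] using congrFun (heig j) i
  rw [← hMRt, Matrix.mul_assoc,
    mul_eq_one_comm.mp (of_mul_transpose_eq_one_of_orthonormal hortho), Matrix.mul_one]

lemma dotProduct_inv_mulVec_eq_sum_of_orthonormal_eigenvectors {M : Matrix ι ι K} {d : ι → K}
    (hortho : ∀ i j, u i ⬝ᵥ u j = if i = j then 1 else 0)
    (heig : ∀ i, M *ᵥ u i = d i • u i) (hd : ∀ i, d i ≠ 0) (v : ι → K) :
    v ⬝ᵥ (M⁻¹ *ᵥ v) = ∑ i, (d i)⁻¹ * (u i ⬝ᵥ v) ^ 2 := by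
  have hRRt := of_mul_transpose_eq_one_of_orthonormal hortho
  have hdinv : (diagonal d)⁻¹ = diagonal d⁻¹ := by
    refine inv_eq_right_inv ?_
    rw [diagonal_mul_diagonal, ← diagonal_one]
    exact congrArg diagonal (funext fun i => mul_inv_cancel₀ (hd i))
  rw [eq_transpose_mul_diagonal_mul_of_orthonormal_eigenvectors hortho heig, mul_inv_rev,
    mul_inv_rev, inv_eq_right_inv hRRt, inv_eq_right_inv (mul_eq_one_comm.mp hRRt), hdinv,
    ← mulVec_mulVec, ← mulVec_mulVec, dotProduct_mulVec, vecMul_transpose]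
  simp only [dotProduct, mulVec_diagonal, Pi.inv_apply]
  refine Finset.sum_congr rfl fun i _ => ?_
  simp only [mulVec, dotProduct, of_apply]
  ring

end OrthonormalEigenbasis

end Matrix

/-- Suppose `λ > 0`, `λ̂ > 0`, and `μ ∈ (0, 1]` satisfies
`μ ≤ λ̃/λ`.  Then `μ √(σ_N/σ_{p+1}) · λ ≤ λ̂ ≤ λ`, and consequently
`√(λ² − λ̂²) ≤ √(1 − (σ_N/σ_{p+1}) μ²) · λ`, where `λ = (gᵀ H⁻¹ g)^{1/2}`,
`λ̃ = (gᵀ P H_r⁻¹ Pᵀ g)^{1/2}`, `λ̂ = (gᵀ P Q⁻¹ Pᵀ g)^{1/2}`, and `Q` is the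
coarse truncated approximation of `H_r := Pᵀ H P`. -/
theorem stmt8 {n N p : ℕ} (hpN : p < N)
    (H : Matrix (Fin n) (Fin n) ℝ) (hH : H.PosDef)
    (P : Matrix (Fin n) (Fin N) ℝ) (hP : P.rank = N)
    (σ : Fin N → ℝ) (u : Fin N → Fin N → ℝ)
    (hσpos : ∀ i, 0 < σ i)
    (hσmono : ∀ i j : Fin N, i ≤ j → σ j ≤ σ i)
    (hortho : ∀ i j : Fin N, u i ⬝ᵥ u j = if i = j then (1 : ℝ) else 0)
    (hHreig : ∀ i, (Pᵀ * H * P) *ᵥ u i = σ i • u i)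
    (Q : Matrix (Fin N) (Fin N) ℝ)
    (hQeig : ∀ i : Fin N, Q *ᵥ u i = (if (i : ℕ) < p then σ i else σ ⟨p, hpN⟩) • u i)
    (g : Fin n → ℝ)
    (lam lamtilde lamhat : ℝ)
    (hlam : lam = Real.sqrt (g ⬝ᵥ (H⁻¹ *ᵥ g)))
    (hlamtilde : lamtilde = Real.sqrt ((Pᵀ *ᵥ g) ⬝ᵥ ((Pᵀ * H * P)⁻¹ *ᵥ (Pᵀ *ᵥ g))))
    (hlamhat : lamhat = Real.sqrt ((Pᵀ *ᵥ g) ⬝ᵥ (Q⁻¹ *ᵥ (Pᵀ *ᵥ g))))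
    (hlampos : 0 < lam)
    (μ : ℝ) (hμ0 : 0 < μ) (hμ : μ ≤ lamtilde / lam) :
    μ * Real.sqrt (σ ⟨N - 1, by omega⟩ / σ ⟨p, hpN⟩) * lam ≤ lamhat ∧
    lamhat ≤ lam ∧
    Real.sqrt (lam ^ 2 - lamhat ^ 2)
      ≤ Real.sqrt (1 - σ ⟨N - 1, by omega⟩ / σ ⟨p, hpN⟩ * μ ^ 2) * lam := by
  subst hlam hlamtilde hlamhat
  set k : Fin N := ⟨p, hpN⟩
  set r := σ ⟨N - 1, by omega⟩ / σ k
  set L := g ⬝ᵥ (H⁻¹ *ᵥ g)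
  set A := (Pᵀ *ᵥ g) ⬝ᵥ ((Pᵀ * H * P)⁻¹ *ᵥ (Pᵀ *ᵥ g))
  set B := (Pᵀ *ᵥ g) ⬝ᵥ (Q⁻¹ *ᵥ (Pᵀ *ᵥ g))
  have hσ : Antitone σ := fun i j hij => hσmono i j hij
  have hQeig_max (i : Fin N) : Q *ᵥ u i = max (σ i) (σ k) • u i := by
    rw [hQeig, ← hσ.ite_lt_eq_max]; rfl
  have hτpos (i : Fin N) : 0 < max (σ i) (σ k) := lt_max_of_lt_left (hσpos i)
  have hA : A = ∑ i, (σ i)⁻¹ * (u i ⬝ᵥ (Pᵀ *ᵥ g)) ^ 2 :=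
    dotProduct_inv_mulVec_eq_sum_of_orthonormal_eigenvectors hortho hHreig
      (fun i => (hσpos i).ne') _
  have hB : B = ∑ i, (max (σ i) (σ k))⁻¹ * (u i ⬝ᵥ (Pᵀ *ᵥ g)) ^ 2 :=
    dotProduct_inv_mulVec_eq_sum_of_orthonormal_eigenvectors hortho hQeig_max
      (fun i => (hτpos i).ne') _
  have hBA : B ≤ A := by
    rw [hA, hB, ← one_mul (∑ i, _)]
    exact mul_sum_inv_mul_sq_le_sum_inv_mul_sq hσpos hτpos
      fun i => (one_mul (σ i)).trans_le (le_max_left _ _)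
  have hrAB : r * A ≤ B := by
    rw [hA, hB]
    refine mul_sum_inv_mul_sq_le_sum_inv_mul_sq hτpos hσpos
      fun i => div_mul_max_le (hσpos k) (hσpos _).le (hσ ?_) (hσ ?_) <;>
      simp only [Fin.le_def] <;> omega
  have hAL : A ≤ L := hH.dotProduct_inv_compression_mulVec_le
    (mulVec_injective_of_rank_eq_card (hP.trans (Fintype.card_fin N).symm)) g
  have hr0 : 0 ≤ r := div_nonneg (hσpos _).le (hσpos k).le
  have hlower : μ * √r * √L ≤ √B := by
    calc μ * √r * √L = √r * (μ * √L) := by ring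
      _ ≤ √r * √A :=
        mul_le_mul_of_nonneg_left ((le_div_iff₀ hlampos).mp hμ) (Real.sqrt_nonneg r)
      _ ≤ √B := by rw [← Real.sqrt_mul hr0]; exact Real.sqrt_le_sqrt hrAB
  refine ⟨hlower, Real.sqrt_le_sqrt (hBA.trans hAL), ?_⟩
  rw [show r * μ ^ 2 = (μ * √r) ^ 2 by rw [mul_pow, Real.sq_sqrt hr0, mul_comm]]
  exact Real.sqrt_sq_sub_sq_le_of_mul_le (Real.sqrt_nonneg _) (by positivity) hlower
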